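/- arXiv:2412.09390 — 4 statements merged into one kernel-verified Lean document; each statement's English description precedes it below -/
import Mathlib

section
/- Let E ⊆ [1,2] with upper Minkowski dimension β and quasi-Assouad dimension γ > 0. Then for every α ≥ 0, ν♯(α) ≤ max(α, (1 − β/γ)α + β). In particular, ν♯(α) = α whenever α ≥ γ. -/
/-!
Fix `ε > 0` and write `β` for the upper Minkowski dimension. For `θ` close to `1` the Assouad
spectrum gives `N(E ∩ J, δ) ≤ c (|J|/δ)^a` with `a < γ + ε` whenever `|J| ≥ δ^θ`, while
`N(E ∩ J, δ) ≤ N(E, δ) ≤ δ^(-(β + ε))` for every `J`. After raising `a` to at least `α`, the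
geometric mean of these two bounds with weights `α/a` and `1 - α/a` cancels the factor `|J|^α`
and gives `|J|^(-α) N(E ∩ J, δ) ≲ δ^(-(α + (β + ε)(1 - α/a)))`; since `β ≤ γ`, this exponent is
at most `max α ((1 - β/γ) α + β) + ε`. An interval shorter than `δ^θ` is enlarged to length
`δ^θ`, which only costs a factor `δ^(-(1 - θ) a)`. Conversely, a single interval of length `δ`
meeting `E` shows `ν♯(α) ≥ α`.
-/


open MeasureTheory Filter Set

noncomputable section

/-- Minimal number of closed intervals of length `δ` needed to cover `A`. -/
def coverN (A : Set ℝ) (δ : ℝ) : ℕ :=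
  sInf {n : ℕ | ∃ c : Fin n → ℝ, A ⊆ ⋃ i, Set.Icc (c i) (c i + δ)}

/-- The upper Minkowski dimension of `E`. -/
def upperMink (E : Set ℝ) : ℝ :=
  Filter.limsup (fun δ : ℝ => Real.log (coverN E δ) / Real.log (1/δ))
    (nhdsWithin 0 (Set.Ioi 0))

/-- The quantity `ν♯(α)`. -/
def nuSharp (E : Set ℝ) (α : ℝ) : ℝ :=
  Filter.limsup (fun δ : ℝ =>
    Real.log (sSup {v : ℝ | ∃ a b : ℝ, 1 ≤ a ∧ a ≤ b ∧ b ≤ 2 ∧ δ ≤ b - a ∧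
      v = Real.rpow (b - a) (-α) * (coverN (E ∩ Set.Icc a b) δ : ℝ)}) / Real.log (1/δ))
    (nhdsWithin 0 (Set.Ioi 0))


/-- The upper Assouad spectrum of `E` at `θ`: the infimum of all `a > 0` for which
there is `c > 0` such that `N(E ∩ J, δ) ≤ c (|J|/δ)^a` for all `δ ∈ (0,1)` and all
intervals `J ⊆ [1,2]` with `|J| ≥ δ^θ`. -/
def upperAssouadSpec (E : Set ℝ) (θ : ℝ) : ℝ :=
  sInf {a : ℝ | 0 < a ∧ ∃ c : ℝ, 0 < c ∧ ∀ δ ∈ Set.Ioo (0:ℝ) 1, ∀ x y : ℝ,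
    1 ≤ x → x ≤ y → y ≤ 2 → Real.rpow δ θ ≤ y - x →
    (coverN (E ∩ Set.Icc x y) δ : ℝ) ≤ c * Real.rpow ((y - x)/δ) a}

open Topology

section CoveringNumbers

variable {A B : Set ℝ} {x y δ : ℝ}

theorem exists_cover_of_subset_Icc (hA : A ⊆ Icc x y) (hδ : 0 < δ) :
    ∃ c : Fin (⌊(y - x) / δ⌋₊ + 1) → ℝ, A ⊆ ⋃ i, Icc (c i) (c i + δ) := by
  refine ⟨fun i => x + i * δ, fun z hz => ?_⟩
  obtain ⟨hxz, hzy⟩ := hA hz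
  have hk : ⌊(z - x) / δ⌋₊ < ⌊(y - x) / δ⌋₊ + 1 :=
    Nat.lt_succ_of_le (Nat.floor_le_floor (by gcongr))
  refine mem_iUnion.2 ⟨⟨_, hk⟩, ?_⟩
  have hle := Nat.floor_le (div_nonneg (sub_nonneg.2 hxz) hδ.le)
  have hlt := Nat.lt_floor_add_one ((z - x) / δ)
  rw [le_div_iff₀ hδ] at hle
  rw [div_lt_iff₀ hδ] at hlt
  constructor <;> dsimp only <;> linarith

theorem coverN_le_div_add_one (hA : A ⊆ Icc x y) (hxy : x ≤ y) (hδ : 0 < δ) :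
    (coverN A δ : ℝ) ≤ (y - x) / δ + 1 := by
  have h : coverN A δ ≤ ⌊(y - x) / δ⌋₊ + 1 := Nat.sInf_le (exists_cover_of_subset_Icc hA hδ)
  calc (coverN A δ : ℝ) ≤ (⌊(y - x) / δ⌋₊ : ℝ) + 1 := by exact_mod_cast h
    _ ≤ (y - x) / δ + 1 := by
      gcongr
      exact Nat.floor_le (div_nonneg (sub_nonneg.2 hxy) hδ.le)

theorem exists_cover_card_coverN (hA : A ⊆ Icc x y) (hδ : 0 < δ) :
    ∃ c : Fin (coverN A δ) → ℝ, A ⊆ ⋃ i, Icc (c i) (c i + δ) :=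
  Nat.sInf_mem (s := {n | ∃ c : Fin n → ℝ, A ⊆ ⋃ i, Icc (c i) (c i + δ)})
    ⟨_, exists_cover_of_subset_Icc hA hδ⟩

theorem coverN_mono (hAB : A ⊆ B) (hB : B ⊆ Icc x y) (hδ : 0 < δ) :
    coverN A δ ≤ coverN B δ :=
  let ⟨c, hc⟩ := exists_cover_card_coverN hB hδ
  Nat.sInf_le ⟨c, hAB.trans hc⟩

theorem one_le_coverN (hne : A.Nonempty) (hA : A ⊆ Icc x y) (hδ : 0 < δ) :
    1 ≤ coverN A δ := by
  obtain ⟨c, hc⟩ := exists_cover_card_coverN hA hδ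
  obtain ⟨z, hz⟩ := hne
  obtain ⟨i, -⟩ := mem_iUnion.1 (hc hz)
  exact i.pos

end CoveringNumbers

theorem exists_Icc_subset_Icc_one_two {x y T : ℝ} (hx : 1 ≤ x) (hy : y ≤ 2)
    (hxyT : y - x ≤ T) (hT : T ≤ 1) :
    ∃ x', 1 ≤ x' ∧ x' + T ≤ 2 ∧ Icc x y ⊆ Icc x' (x' + T) := by
  refine ⟨min x (2 - T), le_min hx (by linarith), by linarith [min_le_right x (2 - T)],
    Icc_subset_Icc (min_le_left _ _) ?_⟩
  rw [← min_add_add_right, sub_add_cancel]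
  exact le_min (by linarith) hy

def growthExponent (f : ℝ → ℝ) : ℝ :=
  limsup (fun δ => Real.log (f δ) / Real.log (1 / δ)) (𝓝[>] 0)

theorem upperMink_eq_growthExponent (E : Set ℝ) :
    upperMink E = growthExponent fun δ => (coverN E δ : ℝ) := rfl

section GrowthExponent

variable {f : ℝ → ℝ} {δ r s x : ℝ}

theorem eventually_mem_Ioo_zero_one : ∀ᶠ δ in 𝓝[>] (0 : ℝ), δ ∈ Ioo 0 1 :=
  Ioo_mem_nhdsGT one_pos

theorem log_rpow_neg_eq (hδ : 0 < δ) (s : ℝ) :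
    Real.log (δ ^ (-s)) = s * Real.log (1 / δ) := by
  rw [Real.log_rpow hδ, one_div, Real.log_inv]; ring

theorem log_div_log_inv_le_iff (hδ : δ ∈ Ioo 0 1) (hx : 0 < x) :
    Real.log x / Real.log (1 / δ) ≤ s ↔ x ≤ δ ^ (-s) := by
  have hL : 0 < Real.log (1 / δ) := Real.log_pos (one_lt_one_div hδ.1 hδ.2)
  rw [div_le_iff₀ hL, ← log_rpow_neg_eq hδ.1, Real.log_le_log_iff hx (by positivity [hδ.1])]

theorem le_log_div_log_inv_iff (hδ : δ ∈ Ioo 0 1) (hx : 0 < x) :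
    s ≤ Real.log x / Real.log (1 / δ) ↔ δ ^ (-s) ≤ x := by
  have hL : 0 < Real.log (1 / δ) := Real.log_pos (one_lt_one_div hδ.1 hδ.2)
  rw [le_div_iff₀ hL, ← log_rpow_neg_eq hδ.1, Real.log_le_log_iff (by positivity [hδ.1]) hx]

theorem eventually_mul_rpow_neg_le (C : ℝ) {ε : ℝ} (hε : 0 < ε) :
    ∀ᶠ δ in 𝓝[>] (0 : ℝ), C * δ ^ (-s) ≤ δ ^ (-(s + ε)) := by
  filter_upwards [(tendsto_rpow_neg_nhdsGT_zero (neg_lt_zero.2 hε)).eventually_ge_atTop C,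
    self_mem_nhdsWithin] with δ hC hδ
  rw [neg_add, Real.rpow_add hδ, mul_comm (δ ^ (-s))]
  exact mul_le_mul_of_nonneg_right hC (Real.rpow_nonneg hδ.le _)

theorem growthExponent_le (hf : ∀ᶠ δ in 𝓝[>] 0, 1 ≤ f δ)
    (hup : ∀ ε > 0, ∀ᶠ δ in 𝓝[>] 0, f δ ≤ δ ^ (-(s + ε))) : growthExponent f ≤ s := by
  have hcobdd : IsCoboundedUnder (· ≤ ·) (𝓝[>] 0)
      fun δ => Real.log (f δ) / Real.log (1 / δ) := by
    refine isCoboundedUnder_le_of_eventually_le _ (x := 0) ?_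
    filter_upwards [hf, eventually_mem_Ioo_zero_one] with δ h1 hδ
    rw [le_log_div_log_inv_iff hδ (by linarith), neg_zero, Real.rpow_zero]
    exact h1
  refine le_of_forall_pos_le_add fun ε hε => limsup_le_of_le hcobdd ?_
  filter_upwards [hf, hup ε hε, eventually_mem_Ioo_zero_one] with δ h1 hle hδ
  exact (log_div_log_inv_le_iff hδ (by linarith)).2 hle

theorem isBoundedUnder_of_le_rpow (hf : ∀ᶠ δ in 𝓝[>] 0, 0 < f δ)
    (hup : ∀ᶠ δ in 𝓝[>] 0, f δ ≤ δ ^ (-s)) :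
    IsBoundedUnder (· ≤ ·) (𝓝[>] 0) fun δ => Real.log (f δ) / Real.log (1 / δ) := by
  refine isBoundedUnder_of_eventually_le (a := s) ?_
  filter_upwards [hf, hup, eventually_mem_Ioo_zero_one] with δ hpos hle hδ
  exact (log_div_log_inv_le_iff hδ hpos).2 hle

theorem le_growthExponent (hlow : ∀ᶠ δ in 𝓝[>] 0, δ ^ (-r) ≤ f δ)
    (hup : ∀ᶠ δ in 𝓝[>] 0, f δ ≤ δ ^ (-s)) : r ≤ growthExponent f := by
  have hpos : ∀ᶠ δ in 𝓝[>] 0, 0 < f δ := by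
    filter_upwards [hlow, self_mem_nhdsWithin] with δ h hδ
    exact (Real.rpow_pos_of_pos hδ _).trans_le h
  refine le_limsup_of_frequently_le (Eventually.frequently ?_) (isBoundedUnder_of_le_rpow hpos hup)
  filter_upwards [hlow, hpos, eventually_mem_Ioo_zero_one] with δ h hpos hδ
  exact (le_log_div_log_inv_iff hδ hpos).2 h

theorem eventually_le_rpow_of_growthExponent_lt (hf : ∀ᶠ δ in 𝓝[>] 0, 0 < f δ)
    (hup : ∀ᶠ δ in 𝓝[>] 0, f δ ≤ δ ^ (-s)) {t : ℝ} (ht : growthExponent f < t) :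
    ∀ᶠ δ in 𝓝[>] 0, f δ ≤ δ ^ (-t) := by
  filter_upwards [eventually_lt_of_limsup_lt ht (isBoundedUnder_of_le_rpow hf hup), hf,
    eventually_mem_Ioo_zero_one] with δ hlt hpos hδ
  exact (log_div_log_inv_le_iff hδ hpos).1 hlt.le

end GrowthExponent

section MinkowskiDimension

variable {E : Set ℝ}

theorem eventually_one_le_coverN (hE : E ⊆ Icc 1 2) (hne : E.Nonempty) :
    ∀ᶠ δ in 𝓝[>] (0 : ℝ), (1 : ℝ) ≤ coverN E δ := by
  filter_upwards [self_mem_nhdsWithin] with δ hδ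
  exact_mod_cast one_le_coverN hne hE hδ

theorem eventually_coverN_le_rpow_neg_two (hE : E ⊆ Icc 1 2) :
    ∀ᶠ δ in 𝓝[>] (0 : ℝ), (coverN E δ : ℝ) ≤ δ ^ (-2 : ℝ) := by
  filter_upwards [eventually_mul_rpow_neg_le (s := 1) 2 one_pos, eventually_mem_Ioo_zero_one]
    with δ h2 hδ
  have h1 : 1 ≤ 1 / δ := one_le_one_div hδ.1 hδ.2.le
  calc (coverN E δ : ℝ) ≤ (2 - 1) / δ + 1 := coverN_le_div_add_one hE one_le_two hδ.1
    _ ≤ 2 * δ ^ (-1 : ℝ) := by rw [Real.rpow_neg_one, ← one_div]; linarith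
    _ ≤ δ ^ (-2 : ℝ) := by rwa [show -(1 + 1 : ℝ) = -2 by norm_num] at h2

theorem upperMink_nonneg (hE : E ⊆ Icc 1 2) (hne : E.Nonempty) : 0 ≤ upperMink E :=
  (upperMink_eq_growthExponent E).symm ▸ le_growthExponent (by simpa using eventually_one_le_coverN hE hne)
    (eventually_coverN_le_rpow_neg_two hE)

theorem eventually_coverN_le_of_upperMink_lt (hE : E ⊆ Icc 1 2) (hne : E.Nonempty) {t : ℝ}
    (ht : upperMink E < t) : ∀ᶠ δ in 𝓝[>] (0 : ℝ), (coverN E δ : ℝ) ≤ δ ^ (-t) :=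
  eventually_le_rpow_of_growthExponent_lt
    ((eventually_one_le_coverN hE hne).mono fun _ h => one_pos.trans_le h)
    (eventually_coverN_le_rpow_neg_two hE) (upperMink_eq_growthExponent E ▸ ht)

end MinkowskiDimension

def AssouadBound (E : Set ℝ) (θ a c : ℝ) : Prop :=
  ∀ δ ∈ Ioo (0 : ℝ) 1, ∀ x y : ℝ, 1 ≤ x → x ≤ y → y ≤ 2 → δ ^ θ ≤ y - x →
    (coverN (E ∩ Icc x y) δ : ℝ) ≤ c * ((y - x) / δ) ^ a

section AssouadSpectrum

variable {E : Set ℝ} {θ a c δ x y : ℝ}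

theorem upperAssouadSpec_eq_sInf (E : Set ℝ) (θ : ℝ) :
    upperAssouadSpec E θ = sInf {a | 0 < a ∧ ∃ c, 0 < c ∧ AssouadBound E θ a c} := rfl

theorem one_le_div_of_rpow_le (hδ : δ ∈ Ioo 0 1) (hθ : θ ≤ 1) (h : δ ^ θ ≤ y - x) :
    1 ≤ (y - x) / δ := by
  have : δ ≤ δ ^ θ := by
    simpa using Real.rpow_le_rpow_of_exponent_ge hδ.1 hδ.2.le hθ
  rw [le_div_iff₀ hδ.1]
  linarith

theorem AssouadBound.mono {a' c' : ℝ} (h : AssouadBound E θ a c) (hθ : θ ≤ 1) (hc : 0 ≤ c)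
    (ha : a ≤ a') (hc' : c ≤ c') : AssouadBound E θ a' c' := by
  intro δ hδ x y hx hxy hy ht
  have h1 := one_le_div_of_rpow_le hδ hθ ht
  refine (h δ hδ x y hx hxy hy ht).trans ?_
  exact mul_le_mul hc' (Real.rpow_le_rpow_of_exponent_le h1 ha) (by positivity) (hc.trans hc')

theorem assouadBound_one_two (hθ : θ ≤ 1) : AssouadBound E θ 1 2 := by
  intro δ hδ x y hx hxy hy ht
  have h1 := one_le_div_of_rpow_le hδ hθ ht
  rw [Real.rpow_one]
  linarith [coverN_le_div_add_one (inter_subset_right (s := E)) hxy hδ.1]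

theorem exists_assouadBound_lt (hθ : θ ≤ 1) {b : ℝ} (h : upperAssouadSpec E θ < b) :
    ∃ a c, 0 < a ∧ a < b ∧ 1 ≤ c ∧ AssouadBound E θ a c := by
  rw [upperAssouadSpec_eq_sInf] at h
  obtain ⟨a, ⟨ha, c, hc, hA⟩, hab⟩ :=
    exists_lt_of_csInf_lt (by exact ⟨1, one_pos, 2, two_pos, assouadBound_one_two hθ⟩) h
  exact ⟨a, max c 1, ha, hab, le_max_right _ _, hA.mono hθ hc.le le_rfl (le_max_left _ _)⟩

theorem upperMink_le_of_assouadBound (hE : E ⊆ Icc 1 2) (hne : E.Nonempty) (hθ : 0 ≤ θ)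
    (hA : AssouadBound E θ a c) : upperMink E ≤ a := by
  rw [upperMink_eq_growthExponent]
  refine growthExponent_le (eventually_one_le_coverN hE hne) fun ε hε => ?_
  filter_upwards [eventually_mul_rpow_neg_le c hε, eventually_mem_Ioo_zero_one] with δ hc hδ
  have h := hA δ hδ 1 2 le_rfl one_le_two le_rfl
    (by rw [show (2 : ℝ) - 1 = 1 by norm_num]; exact Real.rpow_le_one hδ.1.le hδ.2.le hθ)
  rw [inter_eq_left.2 hE, show ((2 : ℝ) - 1) / δ = δ⁻¹ by norm_num,
    Real.inv_rpow hδ.1.le, ← Real.rpow_neg hδ.1.le] at h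
  exact h.trans hc

theorem upperMink_le_upperAssouadSpec (hE : E ⊆ Icc 1 2) (hne : E.Nonempty) (hθ0 : 0 ≤ θ)
    (hθ1 : θ ≤ 1) : upperMink E ≤ upperAssouadSpec E θ :=
  le_csInf ⟨1, one_pos, 2, two_pos, assouadBound_one_two hθ1⟩
    fun _ ⟨_, _, _, hA⟩ => upperMink_le_of_assouadBound hE hne hθ0 hA

theorem upperMink_le_of_tendsto_upperAssouadSpec (hE : E ⊆ Icc 1 2) (hne : E.Nonempty) {γ : ℝ}
    (hγ : Tendsto (upperAssouadSpec E) (𝓝[<] 1) (𝓝 γ)) : upperMink E ≤ γ := by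
  refine ge_of_tendsto hγ ?_
  filter_upwards [Ioo_mem_nhdsLT zero_lt_one] with θ hθ
  exact upperMink_le_upperAssouadSpec hE hne hθ.1.le hθ.2.le

theorem exists_assouadBound_of_tendsto {γ η K : ℝ}
    (hγ : Tendsto (upperAssouadSpec E) (𝓝[<] 1) (𝓝 γ)) (hη : 0 < η) (hK : 0 < K) :
    ∃ θ a c, θ ∈ Ioo 0 1 ∧ (1 - θ) * K ≤ η ∧ 0 < a ∧ a < γ + η ∧ 1 ≤ c ∧
      AssouadBound E θ a c := by
  obtain ⟨θ, hθspec, hθ, hθK⟩ : ∃ θ, upperAssouadSpec E θ < γ + η ∧ θ ∈ Ioo 0 1 ∧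
      θ ∈ Ioo (1 - η / K) 1 :=
    ((hγ.eventually (gt_mem_nhds (lt_add_of_pos_right γ hη))).and
      (Eventually.and (Ioo_mem_nhdsLT zero_lt_one)
        (Ioo_mem_nhdsLT (sub_lt_self 1 (div_pos hη hK))))).exists
  obtain ⟨a, c, ha, haγ, hc, hA⟩ := exists_assouadBound_lt hθ.2.le hθspec
  have hθη := hθK.1
  rw [sub_lt_comm, lt_div_iff₀ hK] at hθη
  exact ⟨θ, a, c, hθ, hθη.le, ha, haγ, hc, hA⟩

end AssouadSpectrum

theorem le_rpow_mul_rpow_of_le_of_le {v X Y l : ℝ} (hv : 0 ≤ v) (hX : v ≤ X) (hY : v ≤ Y)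
    (hl0 : 0 ≤ l) (hl1 : l ≤ 1) : v ≤ X ^ l * Y ^ (1 - l) :=
  calc v = v ^ l * v ^ (1 - l) := by
        rw [← Real.rpow_add' hv (by norm_num), add_sub_cancel, Real.rpow_one]
    _ ≤ X ^ l * Y ^ (1 - l) :=
        mul_le_mul (Real.rpow_le_rpow hv hX hl0) (Real.rpow_le_rpow hv hY (sub_nonneg.2 hl1))
          (by positivity) (Real.rpow_nonneg (hv.trans hX) _)

section LocalEstimates

variable {E : Set ℝ} {θ a c α s δ x y : ℝ}

theorem rpow_neg_mul_coverN_le_of_le_rpow (hA : AssouadBound E θ a c) (hθ0 : 0 ≤ θ)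
    (hα : 0 ≤ α) (hδ : δ ∈ Ioo 0 1) (hx : 1 ≤ x) (hy : y ≤ 2)
    (hδt : δ ≤ y - x) (ht : y - x ≤ δ ^ θ) :
    (y - x) ^ (-α) * coverN (E ∩ Icc x y) δ ≤ c * δ ^ (-(α + (1 - θ) * a)) := by
  have hT : δ ^ θ ≤ 1 := Real.rpow_le_one hδ.1.le hδ.2.le hθ0
  obtain ⟨x', hx', hx'T, hsub⟩ := exists_Icc_subset_Icc_one_two hx hy ht hT
  have hN : (coverN (E ∩ Icc x y) δ : ℝ) ≤ c * δ ^ ((θ - 1) * a) := by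
    have hmono := coverN_mono (inter_subset_inter_right E hsub) inter_subset_right hδ.1
    have hbound := hA δ hδ x' (x' + δ ^ θ) hx' (by linarith [hδ.1, hδt]) hx'T (by simp)
    rw [add_sub_cancel_left, ← Real.rpow_sub_one hδ.1.ne', ← Real.rpow_mul hδ.1.le] at hbound
    exact (Nat.cast_le.2 hmono).trans hbound
  have hlen : (y - x) ^ (-α) ≤ δ ^ (-α) :=
    Real.rpow_le_rpow_of_nonpos hδ.1 hδt (neg_nonpos.2 hα)
  calc (y - x) ^ (-α) * coverN (E ∩ Icc x y) δ ≤ δ ^ (-α) * (c * δ ^ ((θ - 1) * a)) :=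
        mul_le_mul hlen hN (Nat.cast_nonneg _) (by positivity [hδ.1])
    _ = c * δ ^ (-(α + (1 - θ) * a)) := by
        rw [mul_left_comm, ← Real.rpow_add hδ.1]; ring_nf

theorem rpow_neg_mul_coverN_le_of_rpow_le (hA : AssouadBound E θ a c) (hα : 0 ≤ α)
    (ha : 0 < a) (hαa : α ≤ a) (hc : 1 ≤ c) (hδ : δ ∈ Ioo 0 1) (hx : 1 ≤ x) (hxy : x ≤ y)
    (hy : y ≤ 2) (ht : δ ^ θ ≤ y - x) (hN : (coverN (E ∩ Icc x y) δ : ℝ) ≤ δ ^ (-s)) :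
    (y - x) ^ (-α) * coverN (E ∩ Icc x y) δ ≤ c * δ ^ (-(α + s * (1 - α / a))) := by
  set t := y - x
  set l := α / a
  have ht0 : 0 < t := (Real.rpow_pos_of_pos hδ.1 θ).trans_le ht
  have hl1 : l ≤ 1 := (div_le_one ha).2 hαa
  have hint := le_rpow_mul_rpow_of_le_of_le (Nat.cast_nonneg _) (hA δ hδ x y hx hxy hy ht) hN
    (div_nonneg hα ha.le) hl1
  have hXl : (c * (t / δ) ^ a) ^ l = c ^ l * (t ^ α * δ ^ (-α)) := by
    rw [Real.mul_rpow (by positivity) (by positivity [hδ.1]), ← Real.rpow_mul (by positivity [hδ.1]),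
      mul_div_cancel₀ α ha.ne', Real.div_rpow ht0.le hδ.1.le, div_eq_mul_inv,
      ← Real.rpow_neg hδ.1.le]
  have hYl : (δ ^ (-s)) ^ (1 - l) = δ ^ (-(s * (1 - l))) := by
    rw [← Real.rpow_mul hδ.1.le]; ring_nf
  have hcl : c ^ l ≤ c := by simpa using Real.rpow_le_rpow_of_exponent_le hc hl1
  rw [hXl, hYl] at hint
  calc t ^ (-α) * coverN (E ∩ Icc x y) δ
      ≤ t ^ (-α) * (c ^ l * (t ^ α * δ ^ (-α)) * δ ^ (-(s * (1 - l)))) :=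
        mul_le_mul_of_nonneg_left hint (by positivity)
    _ = c ^ l * (t ^ (-α) * t ^ α) * δ ^ (-α + -(s * (1 - l))) := by
        rw [Real.rpow_add hδ.1]; ring
    _ = c ^ l * δ ^ (-(α + s * (1 - l))) := by
        rw [← Real.rpow_add ht0, neg_add_cancel, Real.rpow_zero, neg_add]; ring
    _ ≤ c * δ ^ (-(α + s * (1 - l))) := by gcongr; positivity [hδ.1]

theorem rpow_neg_mul_coverN_le (hA : AssouadBound E θ a c) (hθ0 : 0 ≤ θ) (hθ1 : θ ≤ 1)
    (hα : 0 ≤ α) (ha : 0 < a) (hαa : α ≤ a) (hc : 1 ≤ c) (hs : 0 ≤ s) (hδ : δ ∈ Ioo 0 1)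
    (hx : 1 ≤ x) (hxy : x ≤ y) (hy : y ≤ 2) (hδt : δ ≤ y - x)
    (hN : (coverN (E ∩ Icc x y) δ : ℝ) ≤ δ ^ (-s)) :
    (y - x) ^ (-α) * coverN (E ∩ Icc x y) δ ≤ c * δ ^ (-(α + s * (1 - α / a) + (1 - θ) * a)) := by
  have hs' : 0 ≤ s * (1 - α / a) := mul_nonneg hs (sub_nonneg.2 ((div_le_one ha).2 hαa))
  have hθ' : 0 ≤ (1 - θ) * a := mul_nonneg (sub_nonneg.2 hθ1) ha.le
  have hmono : ∀ {u v : ℝ}, u ≤ v → c * δ ^ (-u) ≤ c * δ ^ (-v) := fun huv =>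
    mul_le_mul_of_nonneg_left (Real.rpow_le_rpow_of_exponent_ge hδ.1 hδ.2.le (neg_le_neg huv))
      (by linarith)
  rcases le_total (y - x) (δ ^ θ) with ht | ht
  · exact (rpow_neg_mul_coverN_le_of_le_rpow hA hθ0 hα hδ hx hy hδt ht).trans
      (hmono (by linarith))
  · exact (rpow_neg_mul_coverN_le_of_rpow_le hA hα ha hαa hc hδ hx hxy hy ht hN).trans
      (hmono (by linarith))

end LocalEstimates

theorem add_mul_one_sub_div_max_le {α β γ ε a : ℝ} (hα : 0 ≤ α) (hβ : 0 ≤ β) (hβγ : β ≤ γ)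
    (hγ : 0 < γ) (hε : 0 ≤ ε) (ha : 0 < a) (haγ : a < γ + ε) :
    α + (β + ε) * (1 - α / max a α) ≤ max α ((1 - β / γ) * α + β) + ε := by
  rcases le_total a α with haα | hαa
  · rw [max_eq_right haα, div_self (ha.trans_le haα).ne', sub_self, mul_zero, add_zero]
    linarith [le_max_left α ((1 - β / γ) * α + β)]
  · rw [max_eq_left hαa]
    have hratio : β / γ ≤ (β + ε) / a := by
      rw [div_le_div_iff₀ hγ ha]; nlinarith
    have := mul_le_mul_of_nonneg_right hratio hα
    have : (β + ε) * (1 - α / a) = β + ε - (β + ε) / a * α := by ring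
    linarith [le_max_right α ((1 - β / γ) * α + β)]

theorem eventually_rpow_neg_mul_coverN_le {E : Set ℝ} (hE : E ⊆ Icc 1 2) (hne : E.Nonempty)
    {γ : ℝ} (hγpos : 0 < γ) (hγ : Tendsto (upperAssouadSpec E) (𝓝[<] 1) (𝓝 γ))
    {α : ℝ} (hα : 0 ≤ α) {ε : ℝ} (hε : 0 < ε) :
    ∀ᶠ δ in 𝓝[>] (0 : ℝ), ∀ x y : ℝ, 1 ≤ x → x ≤ y → y ≤ 2 → δ ≤ y - x →
      (y - x) ^ (-α) * coverN (E ∩ Icc x y) δ ≤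
        δ ^ (-(max α ((1 - upperMink E / γ) * α + upperMink E) + ε)) := by
  set β := upperMink E
  set M := max α ((1 - β / γ) * α + β)
  set η := ε / 3 with hη_def
  have hη : 0 < η := by positivity
  have hβ0 : 0 ≤ β := upperMink_nonneg hE hne
  obtain ⟨θ, a₀, c, hθ, hθη, ha₀, ha₀γ, hc, hA⟩ :=
    exists_assouadBound_of_tendsto hγ hη (show 0 < γ + η + α by linarith)
  set a := max a₀ α
  have hA' : AssouadBound E θ a c := hA.mono hθ.2.le (by linarith) (le_max_left _ _) le_rfl
  have hexp : α + (β + η) * (1 - α / a) + (1 - θ) * a ≤ M + 2 * η := by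
    have h1 := add_mul_one_sub_div_max_le hα hβ0
      (upperMink_le_of_tendsto_upperAssouadSpec hE hne hγ) hγpos hη.le ha₀ ha₀γ
    have h2 : (1 - θ) * a ≤ (1 - θ) * (γ + η + α) :=
      mul_le_mul_of_nonneg_left (max_le (by linarith) (by linarith)) (by linarith [hθ.2])
    linarith
  filter_upwards [eventually_coverN_le_of_upperMink_lt hE hne (lt_add_of_pos_right β hη),
    eventually_mul_rpow_neg_le (s := M + 2 * η) c hη, eventually_mem_Ioo_zero_one]
    with δ hNE hcδ hδ x y hx hxy hy hδt
  have hN : (coverN (E ∩ Icc x y) δ : ℝ) ≤ δ ^ (-(β + η)) :=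
    (Nat.cast_le.2 (coverN_mono inter_subset_left hE hδ.1)).trans hNE
  calc (y - x) ^ (-α) * coverN (E ∩ Icc x y) δ
      ≤ c * δ ^ (-(α + (β + η) * (1 - α / a) + (1 - θ) * a)) :=
        rpow_neg_mul_coverN_le hA' hθ.1.le hθ.2.le hα (ha₀.trans_le (le_max_left _ _))
          (le_max_right _ _) hc (by linarith) hδ hx hxy hy hδt hN
    _ ≤ c * δ ^ (-(M + 2 * η)) :=
        mul_le_mul_of_nonneg_left
          (Real.rpow_le_rpow_of_exponent_ge hδ.1 hδ.2.le (neg_le_neg hexp)) (by linarith)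
    _ ≤ δ ^ (-(M + ε)) := by rwa [hη_def, show M + 2 * (ε / 3) + ε / 3 = M + ε by ring] at hcδ

def normalizedCoverSup (E : Set ℝ) (α δ : ℝ) : ℝ :=
  sSup {v : ℝ | ∃ a b : ℝ, 1 ≤ a ∧ a ≤ b ∧ b ≤ 2 ∧ δ ≤ b - a ∧
    v = (b - a) ^ (-α) * (coverN (E ∩ Icc a b) δ : ℝ)}

theorem nuSharp_eq_growthExponent (E : Set ℝ) (α : ℝ) :
    nuSharp E α = growthExponent (normalizedCoverSup E α) := rfl

section NormalizedCoverSup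

variable {E : Set ℝ} {α δ B : ℝ}

theorem normalizedCoverSup_le (hδ : δ ≤ 1)
    (hB : ∀ x y : ℝ, 1 ≤ x → x ≤ y → y ≤ 2 → δ ≤ y - x →
      (y - x) ^ (-α) * coverN (E ∩ Icc x y) δ ≤ B) :
    normalizedCoverSup E α δ ≤ B :=
  csSup_le (by exact ⟨_, 1, 2, le_rfl, one_le_two, le_rfl, by norm_num [hδ], rfl⟩)
    fun _ ⟨x, y, hx, hxy, hy, hδt, hv⟩ => hv ▸ hB x y hx hxy hy hδt

theorem rpow_neg_le_normalizedCoverSup (hE : E ⊆ Icc 1 2) (hne : E.Nonempty) (hδ : δ ∈ Ioo 0 1)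
    (hB : ∀ x y : ℝ, 1 ≤ x → x ≤ y → y ≤ 2 → δ ≤ y - x →
      (y - x) ^ (-α) * coverN (E ∩ Icc x y) δ ≤ B) :
    δ ^ (-α) ≤ normalizedCoverSup E α δ := by
  obtain ⟨e, he⟩ := hne
  obtain ⟨x, hx, hxδ, hsub⟩ :=
    exists_Icc_subset_Icc_one_two (hE he).1 (hE he).2 ((sub_self e).le.trans hδ.1.le) hδ.2.le
  have hN : 1 ≤ coverN (E ∩ Icc x (x + δ)) δ :=
    one_le_coverN ⟨e, he, hsub ⟨le_rfl, le_rfl⟩⟩ inter_subset_right hδ.1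
  have hbdd : BddAbove {v : ℝ | ∃ a b : ℝ, 1 ≤ a ∧ a ≤ b ∧ b ≤ 2 ∧ δ ≤ b - a ∧
      v = (b - a) ^ (-α) * (coverN (E ∩ Icc a b) δ : ℝ)} :=
    ⟨B, fun _ ⟨x, y, hx, hxy, hy, hδt, hv⟩ => hv ▸ hB x y hx hxy hy hδt⟩
  refine le_trans ?_ (le_csSup hbdd ⟨x, x + δ, hx, by linarith [hδ.1], hxδ, by simp, rfl⟩)
  rw [add_sub_cancel_left]
  exact le_mul_of_one_le_right (Real.rpow_nonneg hδ.1.le _) (by exact_mod_cast hN)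

end NormalizedCoverSup

theorem nuSharp_le_max (E : Set ℝ) (hE : E ⊆ Set.Icc 1 2) (hne : E.Nonempty)
    (β γ : ℝ) (hβ : β = upperMink E) (hγpos : 0 < γ)
    (hγ : Filter.Tendsto (upperAssouadSpec E) (nhdsWithin 1 (Set.Iio 1)) (nhds γ)) :
    ∀ α : ℝ, 0 ≤ α →
      nuSharp E α ≤ max α ((1 - β/γ) * α + β) ∧ (γ ≤ α → nuSharp E α = α) := by
  subst hβ
  intro α hα
  set M := max α ((1 - upperMink E / γ) * α + upperMink E)
  have hup : ∀ ε > 0, ∀ᶠ δ in 𝓝[>] (0 : ℝ), normalizedCoverSup E α δ ≤ δ ^ (-(M + ε)) :=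
    fun ε hε => by
      filter_upwards [eventually_rpow_neg_mul_coverN_le hE hne hγpos hγ hα hε,
        eventually_mem_Ioo_zero_one] with δ hB hδ
      exact normalizedCoverSup_le hδ.2.le hB
  have hlow : ∀ᶠ δ in 𝓝[>] (0 : ℝ), δ ^ (-α) ≤ normalizedCoverSup E α δ := by
    filter_upwards [eventually_rpow_neg_mul_coverN_le hE hne hγpos hγ hα one_pos,
      eventually_mem_Ioo_zero_one] with δ hB hδ
    exact rpow_neg_le_normalizedCoverSup hE hne hδ hB
  have hle : nuSharp E α ≤ M := by
    rw [nuSharp_eq_growthExponent]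
    refine growthExponent_le ?_ hup
    filter_upwards [hlow, eventually_mem_Ioo_zero_one] with δ h hδ
    exact (Real.one_le_rpow_of_pos_of_le_one_of_nonpos hδ.1 hδ.2.le (neg_nonpos.2 hα)).trans h
  have hge : α ≤ nuSharp E α := by
    rw [nuSharp_eq_growthExponent]
    exact le_growthExponent hlow (hup 1 one_pos)
  refine ⟨hle, fun hγα => le_antisymm (hle.trans_eq (max_eq_left ?_)) hge⟩
  have h := mul_le_mul_of_nonneg_left hγα (div_nonneg (upperMink_nonneg hE hne) hγpos.le)
  rw [div_mul_cancel₀ _ hγpos.ne'] at h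
  linarith
end
end

section
/- Let E ⊆ [1,2] satisfy sup_{|J|=δ^θ} N(E∩J,δ) ≈ δ^{−min((1−θ)γ, β)} uniformly in δ∈(0,1), θ∈[0,1], where 0 ≤ β ≤ γ ≤ 1, γ > 0. Then for all α ≥ 0, ν♯(α) = max(α, (1−β/γ)α + β). -/
open MeasureTheory Filter Set

noncomputable section

/-- `sup_{|J| = δ^θ} N(E ∩ J, δ)`, the supremum over subintervals `J ⊆ [1,2]` of
length exactly `δ^θ` of the covering numbers `N(E ∩ J, δ)`. -/
def supCoverExact (E : Set ℝ) (δ θ : ℝ) : ℝ :=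
  sSup {v : ℝ | ∃ a b : ℝ, 1 ≤ a ∧ a ≤ b ∧ b ≤ 2 ∧ b - a = Real.rpow δ θ ∧
    v = (coverN (E ∩ Set.Icc a b) δ : ℝ)}

/-! The sets `E ∩ J` over which `ν♯(α)` takes a supremum have lengths `|J| = δ^θ`, `θ ∈ [0,1]`;
at scale `θ` the hypothesis makes the best weighted count `|J|^{-α} N(E ∩ J, δ)` comparable to
`δ^{-(θα + min((1-θ)γ, β))}`. Hence the supremum is comparable to `δ^{-f}`, where `f` is the maximum
of the concave piecewise linear function `θ ↦ θα + min((1-θ)γ, β)` on `[0,1]`, attained at `θ = 1`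
or at the kink `θ = 1 - β/γ`; comparability up to a constant gives `ν♯(α) = f`. -/

open Topology

lemma coverN_le_of_subset_Icc {A : Set ℝ} {x y δ : ℝ} (hA : A ⊆ Icc x y) (hδ : 0 < δ) :
    coverN A δ ≤ ⌈(y - x) / δ⌉₊ + 1 := by
  refine Nat.sInf_le ⟨fun i : Fin (⌈(y - x) / δ⌉₊ + 1) => x + i * δ, fun z hz => ?_⟩
  obtain ⟨hxz, hzy⟩ := hA hz
  set k := ⌊(z - x) / δ⌋₊
  have hk_le : (k : ℝ) * δ ≤ z - x :=
    (le_div_iff₀ hδ).1 (Nat.floor_le (div_nonneg (by linarith) hδ.le))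
  have hk_lt : z - x < (k + 1) * δ := (div_lt_iff₀ hδ).1 (Nat.lt_floor_add_one _)
  have hk : k < ⌈(y - x) / δ⌉₊ + 1 :=
    Nat.lt_succ_of_le <| (Nat.floor_le_floor (by gcongr)).trans (Nat.floor_le_ceil _)
  exact mem_iUnion.2 ⟨⟨k, hk⟩, by dsimp only; constructor <;> linarith⟩

lemma exists_rpow_eq_of_mem_Icc {δ x : ℝ} (hδ : 0 < δ) (hx : x ∈ Icc δ 1) :
    ∃ θ ∈ Icc (0 : ℝ) 1, δ ^ θ = x := by
  have hcont : ContinuousOn (fun θ : ℝ => δ ^ θ) (Icc 0 1) :=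
    fun θ _ => (Real.continuousAt_const_rpow hδ.ne').continuousWithinAt
  simpa using intermediate_value_Icc' (zero_le_one' ℝ) hcont (by simpa using hx)

lemma isGreatest_image_Icc_add_min {α β γ : ℝ} (hα : 0 ≤ α) (hβ : 0 ≤ β) (hβγ : β ≤ γ)
    (hγ : 0 < γ) :
    IsGreatest ((fun θ => θ * α + min ((1 - θ) * γ) β) '' Icc 0 1)
      (max α ((1 - β / γ) * α + β)) := by
  have hβγ' : β / γ ≤ 1 := (div_le_one hγ).2 hβγ
  have hβγ0 : 0 ≤ β / γ := div_nonneg hβ hγ.le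
  have hkink : β / γ * γ = β := div_mul_cancel₀ β hγ.ne'
  refine ⟨?_, ?_⟩
  · rcases max_cases α ((1 - β / γ) * α + β) with ⟨hmax, -⟩ | ⟨hmax, -⟩ <;> rw [hmax]
    · exact ⟨1, ⟨zero_le_one, le_rfl⟩, by simp [hβ]⟩
    · refine ⟨1 - β / γ, ⟨by linarith, by linarith⟩, ?_⟩
      simp only [sub_sub_cancel, hkink, min_self]
  · rintro _ ⟨θ, ⟨hθ0, hθ1⟩, rfl⟩
    dsimp only
    rcases le_total θ (1 - β / γ) with hθ | hθ
    · have := min_le_right ((1 - θ) * γ) β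
      exact le_max_of_le_right (by nlinarith)
    · have hmin : (1 - θ) * γ ≤ β := by nlinarith
      rw [min_eq_left hmin]
      rcases le_total α γ with hαγ | hαγ
      · exact le_max_of_le_right (by nlinarith [mul_nonneg (sub_nonneg.2 hθ) (sub_nonneg.2 hαγ)])
      · exact le_max_of_le_left (by nlinarith [mul_nonneg (sub_nonneg.2 hθ1) (sub_nonneg.2 hαγ)])

lemma tendsto_log_div_log_inv_of_bounds {S : ℝ → ℝ} {C f : ℝ} (hC : 0 < C)
    (hS : ∀ δ ∈ Ioo (0 : ℝ) 1, C⁻¹ * δ ^ (-f) ≤ S δ ∧ S δ ≤ C * δ ^ (-f)) :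
    Tendsto (fun δ => Real.log (S δ) / Real.log (1 / δ)) (𝓝[>] 0) (𝓝 f) := by
  have hlog_inv : Tendsto (fun δ : ℝ => Real.log (1 / δ)) (𝓝[>] 0) atTop :=
    Real.tendsto_log_atTop.comp (tendsto_inv_nhdsGT_zero.congr fun x => (one_div x).symm)
  have hdist : ∀ δ ∈ Ioo (0 : ℝ) 1,
      |Real.log (S δ) / Real.log (1 / δ) - f| ≤ Real.log C / Real.log (1 / δ) := by
    rintro δ ⟨hδ0, hδ1⟩
    obtain ⟨hlo, hhi⟩ := hS δ ⟨hδ0, hδ1⟩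
    have hL : 0 < Real.log (1 / δ) := Real.log_pos (one_lt_one_div hδ0 hδ1)
    have hpow : Real.log (δ ^ (-f)) = f * Real.log (1 / δ) := by
      rw [Real.log_rpow hδ0, one_div, Real.log_inv]; ring
    have hlo' := Real.log_le_log (by positivity) hlo
    have hhi' := Real.log_le_log ((by positivity : (0 : ℝ) < _).trans_le hlo) hhi
    rw [Real.log_mul (by positivity) (by positivity), Real.log_inv, hpow] at hlo'
    rw [Real.log_mul hC.ne' (by positivity), hpow] at hhi'
    rw [← mul_div_cancel_right₀ f hL.ne', ← sub_div, abs_div, abs_of_pos hL]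
    exact div_le_div_of_nonneg_right (abs_sub_le_iff.2 ⟨by linarith, by linarith⟩) hL.le
  rw [tendsto_iff_norm_sub_tendsto_zero]
  exact squeeze_zero' (Eventually.of_forall fun _ => norm_nonneg _)
    (eventually_of_mem (Ioo_mem_nhdsGT zero_lt_one) hdist)
    (tendsto_const_nhds.div_atTop hlog_inv)

def weightedCoverSup (E : Set ℝ) (α δ : ℝ) : ℝ :=
  sSup {v : ℝ | ∃ a b : ℝ, 1 ≤ a ∧ a ≤ b ∧ b ≤ 2 ∧ δ ≤ b - a ∧
    v = (b - a) ^ (-α) * (coverN (E ∩ Icc a b) δ : ℝ)}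

lemma nuSharp_eq_limsup_weightedCoverSup (E : Set ℝ) (α : ℝ) :
    nuSharp E α = limsup (fun δ => Real.log (weightedCoverSup E α δ) / Real.log (1 / δ))
      (𝓝[>] 0) := rfl

section Bounds

variable {E : Set ℝ} {α δ θ a b : ℝ}

lemma coverN_inter_Icc_le (ha : 1 ≤ a) (hb : b ≤ 2) (hδ : 0 < δ) :
    (coverN (E ∩ Icc a b) δ : ℝ) ≤ ⌈1 / δ⌉₊ + 1 := by
  have := coverN_le_of_subset_Icc
    (fun _ hx => ⟨ha.trans hx.2.1, hx.2.2.trans hb⟩ : E ∩ Icc a b ⊆ Icc 1 2) hδ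
  rw [show (2 : ℝ) - 1 = 1 by norm_num] at this
  exact_mod_cast this

lemma le_weightedCoverSup (hα : 0 ≤ α) (hδ : 0 < δ) (ha : 1 ≤ a) (hab : a ≤ b) (hb : b ≤ 2)
    (hδab : δ ≤ b - a) :
    (b - a) ^ (-α) * (coverN (E ∩ Icc a b) δ : ℝ) ≤ weightedCoverSup E α δ := by
  refine le_csSup ⟨δ ^ (-α) * (⌈1 / δ⌉₊ + 1), ?_⟩ ⟨a, b, ha, hab, hb, hδab, rfl⟩
  rintro _ ⟨a', b', ha', -, hb', hδab', rfl⟩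
  exact mul_le_mul (Real.rpow_le_rpow_of_nonpos hδ hδab' (neg_nonpos.2 hα))
    (coverN_inter_Icc_le ha' hb' hδ) (Nat.cast_nonneg _) (by positivity)

lemma coverN_le_supCoverExact (hδ : 0 < δ) (ha : 1 ≤ a) (hab : a ≤ b) (hb : b ≤ 2)
    (hθ : b - a = δ ^ θ) :
    (coverN (E ∩ Icc a b) δ : ℝ) ≤ supCoverExact E δ θ := by
  refine le_csSup ⟨⌈1 / δ⌉₊ + 1, ?_⟩ ⟨a, b, ha, hab, hb, hθ, rfl⟩
  rintro _ ⟨a', b', ha', -, hb', -, rfl⟩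
  exact coverN_inter_Icc_le ha' hb' hδ

lemma supCoverExact_le_rpow_mul_weightedCoverSup (hα : 0 ≤ α) (hδ : δ ∈ Ioo (0 : ℝ) 1)
    (hθ : θ ∈ Icc (0 : ℝ) 1) :
    supCoverExact E δ θ ≤ δ ^ (θ * α) * weightedCoverSup E α δ := by
  obtain ⟨hδ0, hδ1⟩ := hδ
  have hδθ_le : δ ^ θ ≤ 1 := Real.rpow_le_one hδ0.le hδ1.le hθ.1
  have hδ_le : δ ≤ δ ^ θ := by
    simpa using Real.rpow_le_rpow_of_exponent_ge hδ0 hδ1.le hθ.2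
  refine csSup_le ⟨_, 1, 1 + δ ^ θ, le_rfl, by linarith [Real.rpow_nonneg hδ0.le θ],
    by linarith, by rw [Real.rpow_eq_pow]; ring, rfl⟩ ?_
  rintro _ ⟨a, b, ha, hab, hb, hθab, rfl⟩
  rw [Real.rpow_eq_pow] at hθab
  have h := le_weightedCoverSup (E := E) hα hδ0 ha hab hb (hθab ▸ hδ_le)
  rw [hθab, ← Real.rpow_mul hδ0.le] at h
  calc (coverN (E ∩ Icc a b) δ : ℝ)
      = δ ^ (θ * α) * (δ ^ (θ * -α) * coverN (E ∩ Icc a b) δ) := by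
        rw [← mul_assoc, ← Real.rpow_add hδ0]; simp
    _ ≤ δ ^ (θ * α) * weightedCoverSup E α δ := by gcongr

lemma weightedCoverSup_le_of_forall (hδ : δ ∈ Ioo (0 : ℝ) 1) {M : ℝ}
    (hM : ∀ θ ∈ Icc (0 : ℝ) 1, δ ^ (-(θ * α)) * supCoverExact E δ θ ≤ M) :
    weightedCoverSup E α δ ≤ M := by
  obtain ⟨hδ0, hδ1⟩ := hδ
  refine csSup_le ⟨_, 1, 1 + δ, le_rfl, by linarith, by linarith, by linarith, rfl⟩ ?_
  rintro _ ⟨a, b, ha, hab, hb, hδab, rfl⟩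
  obtain ⟨θ, hθ, hθab⟩ := exists_rpow_eq_of_mem_Icc hδ0 ⟨hδab, by linarith⟩
  calc (b - a) ^ (-α) * (coverN (E ∩ Icc a b) δ : ℝ)
      ≤ δ ^ (-(θ * α)) * supCoverExact E δ θ := by
        rw [← hθab, ← Real.rpow_mul hδ0.le, mul_neg]
        gcongr
        exact coverN_le_supCoverExact hδ0 ha hab hb hθab.symm
    _ ≤ M := hM θ hθ

lemma weightedCoverSup_bounds {s : ℝ → ℝ} {C f : ℝ} (hα : 0 ≤ α) (hC : 0 < C)
    (hf : IsGreatest ((fun θ => θ * α + s θ) '' Icc 0 1) f) (hδ : δ ∈ Ioo (0 : ℝ) 1)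
    (hs : ∀ θ ∈ Icc (0 : ℝ) 1,
      C⁻¹ * δ ^ (-s θ) ≤ supCoverExact E δ θ ∧ supCoverExact E δ θ ≤ C * δ ^ (-s θ)) :
    C⁻¹ * δ ^ (-f) ≤ weightedCoverSup E α δ ∧ weightedCoverSup E α δ ≤ C * δ ^ (-f) := by
  obtain ⟨⟨θ₀, hθ₀, rfl⟩, hf⟩ := hf
  have hδ0 : 0 < δ := hδ.1
  constructor
  · calc C⁻¹ * δ ^ (-(θ₀ * α + s θ₀)) = δ ^ (-(θ₀ * α)) * (C⁻¹ * δ ^ (-s θ₀)) := by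
          rw [neg_add, Real.rpow_add hδ0]; ring
      _ ≤ δ ^ (-(θ₀ * α)) * (δ ^ (θ₀ * α) * weightedCoverSup E α δ) :=
          mul_le_mul_of_nonneg_left ((hs θ₀ hθ₀).1.trans
            (supCoverExact_le_rpow_mul_weightedCoverSup hα hδ hθ₀)) (by positivity)
      _ = weightedCoverSup E α δ := by
          rw [← mul_assoc, ← Real.rpow_add hδ0]; simp
  · refine weightedCoverSup_le_of_forall hδ fun θ hθ => ?_
    calc δ ^ (-(θ * α)) * supCoverExact E δ θ ≤ δ ^ (-(θ * α)) * (C * δ ^ (-s θ)) := by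
          gcongr; exact (hs θ hθ).2
      _ = C * δ ^ (-(θ * α + s θ)) := by rw [neg_add, Real.rpow_add hδ0]; ring
      _ ≤ C * δ ^ (-(θ₀ * α + s θ₀)) :=
          mul_le_mul_of_nonneg_left (Real.rpow_le_rpow_of_exponent_ge hδ0 hδ.2.le
            (neg_le_neg (hf ⟨θ, hθ, rfl⟩))) hC.le

end Bounds

theorem nuSharp_eq_max_of_assouad_regular_general (E : Set ℝ)
    (β γ : ℝ) (hβ : 0 ≤ β) (hβγ : β ≤ γ) (hγ0 : 0 < γ)
    (C : ℝ) (hC : 1 ≤ C)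
    (hcomp : ∀ δ ∈ Set.Ioo (0:ℝ) 1, ∀ θ ∈ Set.Icc (0:ℝ) 1,
      C⁻¹ * Real.rpow δ (-(min ((1 - θ) * γ) β)) ≤ supCoverExact E δ θ ∧
      supCoverExact E δ θ ≤ C * Real.rpow δ (-(min ((1 - θ) * γ) β))) :
    ∀ α : ℝ, 0 ≤ α → nuSharp E α = max α ((1 - β/γ) * α + β) := by
  intro α hα
  simp only [Real.rpow_eq_pow] at hcomp
  have hC0 : 0 < C := one_pos.trans_le hC
  have hbounds := fun δ hδ => weightedCoverSup_bounds (E := E) hα hC0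
    (isGreatest_image_Icc_add_min hα hβ hβγ hγ0) hδ (hcomp δ hδ)
  rw [nuSharp_eq_limsup_weightedCoverSup]
  exact (tendsto_log_div_log_inv_of_bounds hC0 hbounds).limsup_eq

theorem nuSharp_eq_max_of_assouad_regular (E : Set ℝ) (hE : E ⊆ Set.Icc 1 2)
    (β γ : ℝ) (hβ : 0 ≤ β) (hβγ : β ≤ γ) (hγ : γ ≤ 1) (hγ0 : 0 < γ)
    (C : ℝ) (hC : 1 ≤ C)
    (hcomp : ∀ δ ∈ Set.Ioo (0:ℝ) 1, ∀ θ ∈ Set.Icc (0:ℝ) 1,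
      C⁻¹ * Real.rpow δ (-(min ((1 - θ) * γ) β)) ≤ supCoverExact E δ θ ∧
      supCoverExact E δ θ ≤ C * Real.rpow δ (-(min ((1 - θ) * γ) β))) :
    ∀ α : ℝ, 0 ≤ α → nuSharp E α = max α ((1 - β/γ) * α + β) :=
  nuSharp_eq_max_of_assouad_regular_general E β γ hβ hβγ hγ0 C hC hcomp
end
end

section
/- Let d ≥ 2 and E ⊆ [1,2] nonempty. For the spherical maximal operator M_E f(x) = sup_{t∈E} |A_t f(x)| (where A_t is the spherical average of radius t), if M_E is bounded from radial L^p(ℝ^d) to L^q(ℝ^d) with 1 ≤ p, q < ∞, then p ≤ q. Concretely, for the radial test functions f_k(x) = 2^{−k(d−1)/p} Σ_{n=1}^{2^{k−5}} 1_{[2^k+8n+1, 2^k+8n+7]}(|x|), one has ‖f_k‖_p ≲ 2^{k/p} and ‖M_E f_k‖_q ≳ 2^{−k(d−1)(1/p−1/q)} 2^{k/q}, so the operator norm ratio ‖M_E f_k‖_q/‖f_k‖_p ≳ 2^{−kd(1/p−1/q)} forces p ≤ q as k → ∞. -/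
open MeasureTheory Filter Set
open scoped ENNReal NNReal

noncomputable section

/-- The spherical average `A_t f (x)`: the average of `f` over the sphere of
radius `t` centered at `x`, with respect to the natural surface measure. -/
def sphAvg (d : ℕ) (f : EuclideanSpace ℝ (Fin d) → ℝ) (t : ℝ)
    (x : EuclideanSpace ℝ (Fin d)) : ℝ :=
  ⨍ y : Metric.sphere (0 : EuclideanSpace ℝ (Fin d)) 1,
    f (x + t • (y : EuclideanSpace ℝ (Fin d))) ∂((volume : Measure (EuclideanSpace ℝ (Fin d))).toSphere)

/-- The spherical maximal function with dilations restricted to `E`. -/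
def maxSph (d : ℕ) (E : Set ℝ) (f : EuclideanSpace ℝ (Fin d) → ℝ)
    (x : EuclideanSpace ℝ (Fin d)) : ℝ :=
  ⨆ t : E, |sphAvg d f t x|

/-- A function on `ℝ^d` is radial if it only depends on the norm. -/
def IsRadial {d : ℕ} (f : EuclideanSpace ℝ (Fin d) → ℝ) : Prop :=
  ∀ x y : EuclideanSpace ℝ (Fin d), ‖x‖ = ‖y‖ → f x = f y

/-!
Test the bound on the indicator of the ball of radius `S + 2`. Every sphere of radius `t ≤ 2`
centred in the ball of radius `S` lies inside it, so the maximal function is at least `1` there,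
and the bound gives `|B_S|^(1/q) ≤ C |B_{S+2}|^(1/p) ≤ C 2^(d/p) |B_S|^(1/p)`. As `|B_S| → ∞`,
this forces `1/q ≤ 1/p`.
-/

open Metric

theorem norm_average_le_of_norm_le {α F : Type*} [MeasurableSpace α] {μ : Measure α}
    [IsFiniteMeasure μ] [NormedAddCommGroup F] [NormedSpace ℝ F] {f : α → F} {M : ℝ}
    (hM : 0 ≤ M) (hf : ∀ x, ‖f x‖ ≤ M) : ‖⨍ x, f x ∂μ‖ ≤ M := by
  rcases eq_zero_or_neZero μ with rfl | hμ
  · simpa using hM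
  have hμ : 0 < μ.real univ := measureReal_univ_pos
  rw [average_eq, norm_smul, norm_inv, Real.norm_of_nonneg hμ.le, inv_mul_le_iff₀ hμ, mul_comm]
  exact norm_integral_le_of_norm_le_const (.of_forall hf)

theorem le_of_eventually_rpow_le_mul_rpow {ι : Type*} {l : Filter ι} [l.NeBot] {V : ι → ℝ}
    (hV : Tendsto V l atTop) {a b K : ℝ} (h : ∀ᶠ i in l, V i ^ a ≤ K * V i ^ b) : a ≤ b := by
  by_contra! hab
  have hgrow : Tendsto (fun i => V i ^ (a - b)) l atTop :=
    (tendsto_rpow_atTop (sub_pos.2 hab)).comp hV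
  obtain ⟨i, hi, hVi, hK⟩ :=
    (h.and ((hV.eventually_gt_atTop 0).and (hgrow.eventually_gt_atTop K))).exists
  have hsplit : V i ^ a = V i ^ (a - b) * V i ^ b := by rw [← Real.rpow_add hVi, sub_add_cancel]
  have hpos : 0 < V i ^ b := Real.rpow_pos_of_pos hVi b
  nlinarith

theorem tendsto_measureReal_closedBall_atTop {F : Type*} [NormedAddCommGroup F]
    [NormedSpace ℝ F] [MeasurableSpace F] [BorelSpace F] [FiniteDimensional ℝ F] [Nontrivial F]
    (μ : Measure F) [μ.IsAddHaarMeasure] (x : F) :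
    Tendsto (fun r => μ.real (closedBall x r)) atTop atTop := by
  have hunit : 0 < μ.real (ball (0 : F) 1) :=
    ENNReal.toReal_pos (measure_ball_pos μ _ one_pos).ne' measure_ball_lt_top.ne
  refine ((tendsto_pow_atTop (Module.finrank_pos (R := ℝ) (M := F)).ne').atTop_mul_const
    hunit).congr' ?_
  filter_upwards [eventually_ge_atTop 0] with r hr
  rw [Measure.addHaar_real_closedBall μ x hr]

section SphericalMaximal

variable {d : ℕ}

def HasRadialMaximalBound (d : ℕ) (E : Set ℝ) (p q : ℝ) (C : ℝ≥0∞) : Prop :=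
  ∀ f : EuclideanSpace ℝ (Fin d) → ℝ, Measurable f → IsRadial f →
    eLpNorm (maxSph d E f) (ENNReal.ofReal q) volume ≤ C * eLpNorm f (ENNReal.ofReal p) volume

theorem abs_sphAvg_le {f : EuclideanSpace ℝ (Fin d) → ℝ} {M : ℝ} (hf : ∀ z, |f z| ≤ M)
    (t : ℝ) (x : EuclideanSpace ℝ (Fin d)) : |sphAvg d f t x| ≤ M :=
  norm_average_le_of_norm_le
    (f := fun y : sphere (0 : EuclideanSpace ℝ (Fin d)) 1 => f (x + t • (y : _)))
    ((abs_nonneg _).trans (hf 0)) fun _ => hf _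

theorem abs_sphAvg_le_maxSph {E : Set ℝ} {f : EuclideanSpace ℝ (Fin d) → ℝ} {M : ℝ}
    (hf : ∀ z, |f z| ≤ M) {t : ℝ} (ht : t ∈ E) (x : EuclideanSpace ℝ (Fin d)) :
    |sphAvg d f t x| ≤ maxSph d E f x :=
  le_ciSup (f := fun s : E => |sphAvg d f s x|)
    ⟨M, by rintro _ ⟨s, rfl⟩; exact abs_sphAvg_le hf s x⟩ ⟨t, ht⟩

theorem sphAvg_eq_of_forall_sphere_eq [NeZero d] {f : EuclideanSpace ℝ (Fin d) → ℝ} {c t : ℝ}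
    {x : EuclideanSpace ℝ (Fin d)} (h : ∀ y ∈ sphere x |t|, f y = c) : sphAvg d f t x = c := by
  have : NeZero (volume : Measure (EuclideanSpace ℝ (Fin d))).toSphere :=
    ⟨Measure.toSphere_ne_zero _⟩
  have hf (y : sphere (0 : EuclideanSpace ℝ (Fin d)) 1) : f (x + t • (y : _)) = c :=
    h _ (by simp [norm_smul])
  simp only [sphAvg, hf, average_const]

theorem isRadial_indicator_closedBall (R : ℝ) :
    IsRadial ((closedBall (0 : EuclideanSpace ℝ (Fin d)) R).indicator fun _ => (1 : ℝ)) := by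
  intro x y hxy
  simp only [indicator, mem_closedBall_zero_iff, hxy]

theorem indicator_closedBall_le_maxSph [NeZero d] {E : Set ℝ} {r : ℝ} (hE : ∀ t ∈ E, |t| ≤ r)
    (hne : E.Nonempty) (S : ℝ) (x : EuclideanSpace ℝ (Fin d)) :
    (closedBall 0 S).indicator (fun _ => (1 : ℝ)) x ≤
      maxSph d E ((closedBall 0 (S + r)).indicator fun _ => 1) x := by
  obtain ⟨t, ht⟩ := hne
  have hbdd (z : EuclideanSpace ℝ (Fin d)) :
      |(closedBall 0 (S + r)).indicator (fun _ => (1 : ℝ)) z| ≤ 1 := by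
    by_cases hz : z ∈ closedBall 0 (S + r) <;> simp [hz]
  refine le_trans ?_ (abs_sphAvg_le_maxSph hbdd ht x)
  by_cases hx : x ∈ closedBall 0 S
  · rw [indicator_of_mem hx, sphAvg_eq_of_forall_sphere_eq, abs_one]
    intro y hy
    apply indicator_of_mem
    rw [mem_closedBall_zero_iff] at hx ⊢
    rw [mem_sphere, dist_eq_norm] at hy
    linarith [norm_le_insert' y x, hE t ht]
  · rw [indicator_of_notMem hx]
    exact abs_nonneg _

theorem measure_closedBall_rpow_le_of_hasRadialMaximalBound [NeZero d] {E : Set ℝ} {r : ℝ}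
    (hE : ∀ t ∈ E, |t| ≤ r) (hne : E.Nonempty) {p q : ℝ} (hp : 0 < p) (hq : 0 < q) {C : ℝ≥0∞}
    (hbound : HasRadialMaximalBound d E p q C) (S : ℝ) :
    volume (closedBall (0 : EuclideanSpace ℝ (Fin d)) S) ^ (1 / q) ≤
      C * volume (closedBall (0 : EuclideanSpace ℝ (Fin d)) (S + r)) ^ (1 / p) := by
  have hnorm (x : EuclideanSpace ℝ (Fin d)) :
      ‖(closedBall 0 S).indicator (fun _ => (1 : ℝ)) x‖ ≤
        maxSph d E ((closedBall 0 (S + r)).indicator fun _ => 1) x :=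
    (Real.norm_of_nonneg (indicator_nonneg (fun _ _ => zero_le_one) x)).trans_le
      (indicator_closedBall_le_maxSph hE hne S x)
  have h := (eLpNorm_mono_real hnorm).trans (hbound _
    (measurable_const.indicator measurableSet_closedBall) (isRadial_indicator_closedBall _))
  rwa [eLpNorm_indicator_const measurableSet_closedBall (by simpa using hq) ENNReal.ofReal_ne_top,
    eLpNorm_indicator_const measurableSet_closedBall (by simpa using hp) ENNReal.ofReal_ne_top,
    ENNReal.toReal_ofReal hq.le, ENNReal.toReal_ofReal hp.le, enorm_one, one_mul, one_mul] at h

theorem measureReal_closedBall_rpow_le_of_hasRadialMaximalBound [NeZero d] {E : Set ℝ} {r : ℝ}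
    (hE : ∀ t ∈ E, |t| ≤ r) (hne : E.Nonempty) {p q : ℝ} (hp : 0 < p) (hq : 0 < q) {C : ℝ≥0∞}
    (hC : C ≠ ⊤) (hbound : HasRadialMaximalBound d E p q C) {S : ℝ} (hS : r ≤ S) :
    volume.real (closedBall (0 : EuclideanSpace ℝ (Fin d)) S) ^ (1 / q) ≤
      (C * ENNReal.ofReal (2 ^ d) ^ (1 / p)).toReal *
        volume.real (closedBall (0 : EuclideanSpace ℝ (Fin d)) S) ^ (1 / p) := by
  obtain ⟨t, ht⟩ := hne
  have hS0 : 0 ≤ S := (abs_nonneg t).trans ((hE t ht).trans hS)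
  have h := (measure_closedBall_rpow_le_of_hasRadialMaximalBound hE ⟨t, ht⟩ hp hq hbound S).trans
    (mul_le_mul_right (ENNReal.rpow_le_rpow (measure_mono (closedBall_subset_closedBall
      (by linarith : S + r ≤ 2 * S))) (by positivity)) C)
  rw [Measure.addHaar_closedBall_mul _ _ zero_le_two hS0, finrank_euclideanSpace_fin,
    ENNReal.mul_rpow_of_nonneg _ _ (by positivity), ← mul_assoc] at h
  have hfin : C * ENNReal.ofReal (2 ^ d) ^ (1 / p) *
      volume (closedBall (0 : EuclideanSpace ℝ (Fin d)) S) ^ (1 / p) ≠ ⊤ :=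
    ENNReal.mul_ne_top (ENNReal.mul_ne_top hC (by finiteness))
      (ENNReal.rpow_ne_top_of_nonneg (by positivity) measure_closedBall_lt_top.ne)
  simpa [measureReal_def, ENNReal.toReal_rpow] using ENNReal.toReal_mono hfin h

end SphericalMaximal

theorem le_of_maximal_bound (d : ℕ) (hd : 2 ≤ d) (E : Set ℝ)
    (hE : E ⊆ Set.Icc 1 2) (hne : E.Nonempty)
    (p q : ℝ) (hp : 1 ≤ p) (hq : 1 ≤ q)
    (C : ℝ≥0∞) (hC : C ≠ ⊤)
    (hbound : ∀ f : EuclideanSpace ℝ (Fin d) → ℝ, Measurable f → IsRadial f →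
      eLpNorm (maxSph d E f) (ENNReal.ofReal q) volume ≤
        C * eLpNorm f (ENNReal.ofReal p) volume) :
    p ≤ q := by
  have : NeZero d := ⟨by omega⟩
  have hp0 : 0 < p := by linarith
  have hq0 : 0 < q := by linarith
  have hE2 : ∀ t ∈ E, |t| ≤ 2 := fun t ht => abs_le.2 ⟨by linarith [(hE ht).1], (hE ht).2⟩
  have hgrowth := (eventually_ge_atTop 2).mono fun S hS =>
    measureReal_closedBall_rpow_le_of_hasRadialMaximalBound hE2 hne hp0 hq0 hC hbound hS
  exact (one_div_le_one_div hq0 hp0).1 <| le_of_eventually_rpow_le_mul_rpow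
    (tendsto_measureReal_closedBall_atTop volume 0) hgrowth
end
end

section
/- Let t_L ∈ [1/2,5/2], 0 < δ < 1, and let t ∈ [1,2] and x = (x_1, 0, …, 0) ∈ ℝ^d with x_1 ≥ 0 and x_1 − t = −t_L + c_1 δ where |c_1| ≤ 1/10. Let c_2 > 0 with c_2² > 20/9. Then for every y = (y_1, y′) on the unit sphere S^{d−1} with y_1 ≥ 0 and |y′| ≤ c_2^{−1}(δ/x_1)^{1/2}, one has t_L − δ/10 ≤ |x − t y| ≤ t_L + δ. -/
/-!
Let `y₁` be the first coordinate of `y`. Expanding the square,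
`‖x − t y‖² = (x₁ − t)² + 2 t x₁ (1 − y₁) = (t_L − c₁ δ)² + 2 t x₁ (1 − y₁)`.
On the cap, `x₁ (1 − y₁) ≤ x₁ |y′|² ≤ δ / c₂² < 9 δ / 20`, so the correction term is nonnegative
and, as `t ≤ 2 t_L`, at most `(9/5) t_L δ`. Together with `|c₁| ≤ 1/10` this squeezes the norm
between `t_L − δ/10` and `t_L + δ`.
-/

open RealInnerProductSpace

lemma norm_smul_sub_smul_sq_of_norm_eq_one {E : Type*} [NormedAddCommGroup E]
    [InnerProductSpace ℝ E] {e y : E} (he : ‖e‖ = 1) (hy : ‖y‖ = 1) (a t : ℝ) :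
    ‖a • e - t • y‖ ^ 2 = (a - t) ^ 2 + 2 * t * (a * (1 - ⟪e, y⟫)) := by
  rw [norm_sub_sq_real, real_inner_smul_left, real_inner_smul_right, norm_smul, norm_smul,
    he, hy, mul_pow, mul_pow, Real.norm_eq_abs, Real.norm_eq_abs, sq_abs, sq_abs]
  ring

lemma mul_one_sub_le_of_sqrt_one_sub_sq_le {x s c δ : ℝ} (hx : 0 ≤ x) (hδ : 0 ≤ δ)
    (hs₀ : 0 ≤ s) (hs₁ : s ≤ 1) (h : √(1 - s ^ 2) ≤ c⁻¹ * √(δ / x)) :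
    x * (1 - s) ≤ δ / c ^ 2 := by
  have hsq : 1 - s ^ 2 ≤ δ / x / c ^ 2 := by
    have := pow_le_pow_left₀ (Real.sqrt_nonneg _) h 2
    rwa [Real.sq_sqrt (by nlinarith), mul_pow, Real.sq_sqrt (by positivity), inv_pow,
      inv_mul_eq_div] at this
  calc x * (1 - s) ≤ x * (1 - s ^ 2) := mul_le_mul_of_nonneg_left (by nlinarith) hx
    _ ≤ x * (δ / x / c ^ 2) := mul_le_mul_of_nonneg_left hsq hx
    _ ≤ δ / c ^ 2 := by
      rcases hx.eq_or_lt with rfl | hx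
      · simp only [zero_mul]; positivity
      · rw [div_div, ← mul_div_assoc, mul_div_mul_left _ _ hx.ne']

lemma sub_div_ten_le_of_sq_eq {N tL c δ r : ℝ} (hN : 0 ≤ N) (hc : c ≤ 1 / 10) (hδ : 0 ≤ δ)
    (hr : 0 ≤ r) (h : N ^ 2 = (tL - c * δ) ^ 2 + r) : tL - δ / 10 ≤ N :=
  calc tL - δ / 10 ≤ tL - c * δ := by nlinarith
    _ ≤ |tL - c * δ| := le_abs_self _
    _ ≤ N := abs_le_of_sq_le_sq (by linarith) hN

lemma le_add_of_sq_eq {N tL c δ t w : ℝ} (hN : 0 ≤ N) (hc : |c| ≤ 1 / 10) (hδ : 0 ≤ δ)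
    (ht : 0 ≤ t) (htL : t ≤ 2 * tL) (hw₀ : 0 ≤ w) (hw : w ≤ 9 / 20 * δ)
    (h : N ^ 2 = (tL - c * δ) ^ 2 + 2 * t * w) : N ≤ tL + δ := by
  obtain ⟨hc₀, hc₁⟩ := abs_le.mp hc
  have htw : t * w ≤ 2 * tL * (9 / 20 * δ) := mul_le_mul htL hw hw₀ (by linarith)
  -- `2 · (2 t_L) · (9/20) δ + 2 · (1/10) t_L δ = 2 t_L δ`: the origin of the constant `20/9`.
  have hsq : N ^ 2 ≤ (tL + δ) ^ 2 := by
    nlinarith [mul_nonneg (by linarith : 0 ≤ c + 1 / 10) (by nlinarith : 0 ≤ tL * δ),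
      mul_le_mul_of_nonneg_right (by nlinarith : c ^ 2 ≤ 1) (sq_nonneg δ)]
  exact (pow_le_pow_iff_left₀ hN (by linarith) two_ne_zero).mp hsq

theorem sphere_cap_distance_bound (d : ℕ) (hd : 2 ≤ d)
    (tL δ t x1 c1 c2 : ℝ)
    (hδ : δ ∈ Set.Ioo (0:ℝ) 1)
    (ht : t ∈ Set.Icc (1:ℝ) 2) (hx1 : 0 ≤ x1)
    (hc1 : |c1| ≤ 1/10) (hx1t : x1 - t = -tL + c1 * δ)
    (ht2tL : t ≤ 2 * tL)
    (hc2 : 20/9 < c2 ^ 2)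
    (y : EuclideanSpace ℝ (Fin d)) (hy : ‖y‖ = 1)
    (hy1 : 0 ≤ y (⟨0, by omega⟩ : Fin d))
    (hy' : Real.sqrt (1 - (y (⟨0, by omega⟩ : Fin d)) ^ 2) ≤
      c2⁻¹ * Real.sqrt (δ / x1)) :
    tL - δ/10 ≤ ‖(x1 • EuclideanSpace.single (⟨0, by omega⟩ : Fin d) (1:ℝ)) - t • y‖ ∧
    ‖(x1 • EuclideanSpace.single (⟨0, by omega⟩ : Fin d) (1:ℝ)) - t • y‖ ≤ tL + δ := by
  set e := EuclideanSpace.single (⟨0, by omega⟩ : Fin d) (1 : ℝ)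
  have he : ‖e‖ = 1 := by simp [e]
  have hinner : ⟪e, y⟫ = y ⟨0, by omega⟩ := by simp [e, EuclideanSpace.inner_single_left]
  have hy1le : y ⟨0, by omega⟩ ≤ 1 := by simpa [hinner, he, hy] using real_inner_le_norm e y
  have hδ₀ : 0 ≤ δ := hδ.1.le
  have ht₀ : 0 ≤ t := by linarith [ht.1]
  have hcap : x1 * (1 - ⟪e, y⟫) ≤ 9 / 20 * δ := by
    rw [hinner]
    refine (mul_one_sub_le_of_sqrt_one_sub_sq_le hx1 hδ₀ hy1 hy1le hy').trans ?_
    rw [div_le_iff₀ (by linarith)]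
    nlinarith
  have hcap₀ : 0 ≤ x1 * (1 - ⟪e, y⟫) := mul_nonneg hx1 (by linarith)
  have hnorm := norm_smul_sub_smul_sq_of_norm_eq_one he hy x1 t
  rw [show (x1 - t) ^ 2 = (tL - c1 * δ) ^ 2 by rw [hx1t]; ring] at hnorm
  exact ⟨sub_div_ten_le_of_sq_eq (norm_nonneg _) (abs_le.mp hc1).2 hδ₀ (by positivity) hnorm,
    le_add_of_sq_eq (norm_nonneg _) hc1 hδ₀ ht₀ ht2tL hcap₀ hcap hnorm⟩
end
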